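/- Let ι be a finite nonempty type, α ∈ [0, 1), δ ≥ 0, and let (p_t)_{t ≥ 0} be strictly positive probability distributions on ι such that KL(p_t ‖ p_{t−1}) ≤ δ for a fixed index t ≥ 1, and TV(p_{r+1}, p_r) ≤ α·TV(p_r, p_{r−1}) for all r ≥ t. Then sup_{s ≥ 1} TV(p_{t+s}, p_t) ≤ (1/(1 − α))·√(δ/2). -/

import Mathlib

/-
Pinsker's inequality bounds the step `TV (p t) (p (t - 1))` by `√(δ / 2)`. From then on the
contraction makes the steps `TV (p (t + k + 1)) (p (t + k))` decay like `α ^ k` times the first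
one, so by the triangle inequality `TV (p (t + s)) (p t)` is at most a geometric series,
`1 / (1 - α)` times that first step.

Pinsker's inequality is obtained from the pointwise bound `3 (u - 1)² / (2 (u + 2)) ≤ klFun u`
(the difference is convex on `(0, ∞)`, with a critical point at `1`), applied to `u = p i / q i`,
followed by Cauchy–Schwarz in Sedrakyan's form with weights `(2 p i + 4 q i) / 3`, which sum
to `2`.
-/

def IsProbDist {ι : Type*} [Fintype ι] (p : ι → ℝ) : Prop :=
  (∀ i, 0 ≤ p i) ∧ ∑ i, p i = 1

noncomputable def TV {ι : Type*} [Fintype ι] (p q : ι → ℝ) : ℝ :=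
  (1 / 2) * ∑ i, |p i - q i|

/-- Terms with `p i = 0` contribute `0`, since `Real.log 0 = 0`. -/
noncomputable def KL {ι : Type*} [Fintype ι] (p q : ι → ℝ) : ℝ :=
  ∑ i, p i * Real.log (p i / q i)

open Real Set Finset InformationTheory

lemma hasDerivAt_klFun_sub_three_mul_sq_div {x : ℝ} (hx : 0 < x) :
    HasDerivAt (fun u ↦ klFun u - 3 * (u - 1) ^ 2 / (2 * (u + 2)))
      (log x - 3 * (x - 1) * (x + 5) / (2 * (x + 2) ^ 2)) x := by
  have hx2 : x + 2 ≠ 0 := by positivity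
  have := (hasDerivAt_klFun hx.ne').sub
    ((((hasDerivAt_id x).sub_const 1).pow 2).const_mul 3 |>.div
      (((hasDerivAt_id x).add_const 2).const_mul 2) (by simp [hx2]))
  refine this.congr_deriv ?_
  simp only [id, Pi.pow_apply]
  field_simp
  ring

lemma hasDerivAt_log_sub_three_mul_div {x : ℝ} (hx : 0 < x) :
    HasDerivAt (fun u ↦ log u - 3 * (u - 1) * (u + 5) / (2 * (u + 2) ^ 2))
      (1 / x - 27 / (x + 2) ^ 3) x := by
  have hx2 : x + 2 ≠ 0 := by positivity
  have := (hasDerivAt_log hx.ne').sub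
    (((((hasDerivAt_id x).sub_const 1).const_mul 3).mul ((hasDerivAt_id x).add_const 5)).div
      ((((hasDerivAt_id x).add_const 2).pow 2).const_mul 2) (by simp [hx2]))
  refine this.congr_deriv ?_
  simp only [id, Pi.pow_apply, Pi.mul_apply]
  field_simp
  ring

lemma convexOn_klFun_sub_three_mul_sq_div :
    ConvexOn ℝ (Ioi 0) (fun u ↦ klFun u - 3 * (u - 1) ^ 2 / (2 * (u + 2))) := by
  have pos_of_mem : ∀ {x : ℝ}, x ∈ interior (Ioi 0) → 0 < x := by simp
  refine convexOn_of_hasDerivWithinAt2_nonneg (convex_Ioi 0)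
    (fun x hx ↦ (hasDerivAt_klFun_sub_three_mul_sq_div hx).continuousAt.continuousWithinAt)
    (fun x hx ↦ (hasDerivAt_klFun_sub_three_mul_sq_div (pos_of_mem hx)).hasDerivWithinAt)
    (fun x hx ↦ (hasDerivAt_log_sub_three_mul_div (pos_of_mem hx)).hasDerivWithinAt)
    fun x hx ↦ ?_
  replace hx := pos_of_mem hx
  rw [sub_nonneg, div_le_div_iff₀ (by positivity) hx]
  -- `(x + 2) ^ 3 - 27 * x = (x - 1) ^ 2 * (x + 8)`
  nlinarith [mul_nonneg (sq_nonneg (x - 1)) (by positivity : (0 : ℝ) ≤ x + 8)]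

lemma three_mul_sq_div_le_klFun {u : ℝ} (hu : 0 ≤ u) :
    3 * (u - 1) ^ 2 / (2 * (u + 2)) ≤ klFun u := by
  rcases hu.eq_or_lt with rfl | hu
  · norm_num [klFun_zero]
  have hmin : IsMinOn (fun u ↦ klFun u - 3 * (u - 1) ^ 2 / (2 * (u + 2))) (Ioi 0) 1 := by
    refine convexOn_klFun_sub_three_mul_sq_div.isMinOn_of_rightDeriv_eq_zero (by simp) ?_
    rw [(hasDerivAt_klFun_sub_three_mul_sq_div one_pos).hasDerivWithinAt.derivWithin
      (uniqueDiffWithinAt_Ioi 1)]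
    norm_num
  have := hmin (mem_Ioi.2 hu)
  norm_num [klFun_one] at this
  linarith

lemma three_mul_sq_div_le_mul_log_div {x y : ℝ} (hx : 0 ≤ x) (hy : 0 < y) :
    3 * (x - y) ^ 2 / (2 * (x + 2 * y)) ≤ x * log (x / y) - x + y := by
  have h := mul_le_mul_of_nonneg_left (three_mul_sq_div_le_klFun (div_nonneg hx hy.le)) hy.le
  have hl :
      y * (3 * (x / y - 1) ^ 2 / (2 * (x / y + 2))) = 3 * (x - y) ^ 2 / (2 * (x + 2 * y)) := by
    field_simp
  have hr : y * klFun (x / y) = x * log (x / y) - x + y := by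
    rw [klFun_apply]
    field_simp
    ring
  rwa [hl, hr] at h

theorem TV_le_sqrt_KL {ι : Type*} [Fintype ι] {p q : ι → ℝ} (hp : IsProbDist p)
    (hq : IsProbDist q) (hq₀ : ∀ i, 0 < q i) : TV p q ≤ √(KL p q / 2) := by
  set w : ι → ℝ := fun i ↦ 2 * (p i + 2 * q i) / 3
  have hw : ∀ i ∈ Finset.univ, 0 < w i := fun i _ ↦ by
    have := hp.1 i
    have := hq₀ i
    positivity
  have hw_sum : ∑ i, w i = 2 := by
    simp only [w, ← Finset.sum_div, ← Finset.mul_sum, Finset.sum_add_distrib, hp.2, hq.2]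
    norm_num
  have hKL : KL p q = ∑ i, (p i * log (p i / q i) - p i + q i) := by
    simp only [KL, Finset.sum_add_distrib, Finset.sum_sub_distrib, hp.2, hq.2, sub_add_cancel]
  have hsedrakyan := Finset.sq_sum_div_le_sum_sq_div Finset.univ (fun i ↦ |p i - q i|) hw
  have hpointwise : ∑ i, |p i - q i| ^ 2 / w i ≤ KL p q := by
    rw [hKL]
    refine Finset.sum_le_sum fun i _ ↦ ?_
    refine le_of_eq_of_le ?_ (three_mul_sq_div_le_mul_log_div (hp.1 i) (hq₀ i))
    simp only [w, sq_abs]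
    field_simp
  rw [hw_sum] at hsedrakyan
  apply Real.le_sqrt_of_sq_le
  unfold TV
  linarith

section TV

variable {ι : Type*} [Fintype ι]

lemma TV_nonneg (p q : ι → ℝ) : 0 ≤ TV p q := by
  unfold TV
  positivity

lemma TV_triangle (p q r : ι → ℝ) : TV p r ≤ TV p q + TV q r := by
  unfold TV
  rw [← mul_add, ← Finset.sum_add_distrib]
  gcongr with i
  exact abs_sub_le _ _ _

lemma TV_le_range_sum_TV_succ (x : ℕ → ι → ℝ) (n : ℕ) :
    TV (x n) (x 0) ≤ ∑ k ∈ range n, TV (x (k + 1)) (x k) := by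
  induction n with
  | zero => simp [TV]
  | succ n ih =>
    rw [Finset.sum_range_succ]
    linarith [TV_triangle (x (n + 1)) (x n) (x 0)]

lemma TV_succ_le_pow_mul_of_contracting {x : ℕ → ι → ℝ} {α : ℝ} (hα : 0 ≤ α)
    (hx : ∀ k, TV (x (k + 2)) (x (k + 1)) ≤ α * TV (x (k + 1)) (x k)) (k : ℕ) :
    TV (x (k + 1)) (x k) ≤ α ^ k * TV (x 1) (x 0) := by
  induction k with
  | zero => simp
  | succ k ih =>
    calc TV (x (k + 2)) (x (k + 1)) ≤ α * TV (x (k + 1)) (x k) := hx k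
      _ ≤ α * (α ^ k * TV (x 1) (x 0)) := by gcongr
      _ = α ^ (k + 1) * TV (x 1) (x 0) := by ring

theorem TV_le_div_one_sub_of_contracting {x : ℕ → ι → ℝ} {α : ℝ} (hα₀ : 0 ≤ α)
    (hα₁ : α < 1)
    (hx : ∀ k, TV (x (k + 2)) (x (k + 1)) ≤ α * TV (x (k + 1)) (x k)) (n : ℕ) :
    TV (x n) (x 0) ≤ TV (x 1) (x 0) / (1 - α) :=
  calc TV (x n) (x 0) ≤ ∑ k ∈ range n, α ^ k * TV (x 1) (x 0) :=
        (TV_le_range_sum_TV_succ x n).trans <|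
          Finset.sum_le_sum fun k _ ↦ TV_succ_le_pow_mul_of_contracting hα₀ hx k
    _ = (∑ k ∈ Ico 0 n, α ^ k) * TV (x 1) (x 0) := by rw [Finset.sum_mul, Finset.range_eq_Ico]
    _ ≤ α ^ 0 / (1 - α) * TV (x 1) (x 0) := by
        gcongr
        · exact TV_nonneg _ _
        · exact geom_sum_Ico_le_of_lt_one hα₀ hα₁
    _ = TV (x 1) (x 0) / (1 - α) := by ring

end TV

theorem uniform_tail_bound_general
    {ι : Type*} [Fintype ι]
    (α δ : ℝ) (hα : α ∈ Set.Ico (0 : ℝ) 1)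
    (t : ℕ)
    (p : ℕ → ι → ℝ) (hprob : ∀ u, IsProbDist (p u)) (hpos : ∀ u i, 0 < p u i)
    (hKL : KL (p t) (p (t - 1)) ≤ δ)
    (hcontr : ∀ r ≥ t, TV (p (r + 1)) (p r) ≤ α * TV (p r) (p (r - 1))) :
    ∀ s ≥ 1, TV (p (t + s)) (p t) ≤ 1 / (1 - α) * Real.sqrt (δ / 2) := by
  intro s _
  obtain ⟨hα₀, hα₁⟩ := hα
  have hpinsker : TV (p t) (p (t - 1)) ≤ √(δ / 2) :=
    (TV_le_sqrt_KL (hprob t) (hprob (t - 1)) (hpos (t - 1))).trans (by gcongr)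
  have hfirst : TV (p (t + 1)) (p t) ≤ TV (p t) (p (t - 1)) :=
    (hcontr t le_rfl).trans (mul_le_of_le_one_left (TV_nonneg _ _) hα₁.le)
  have htail := TV_le_div_one_sub_of_contracting (x := fun k ↦ p (t + k)) hα₀ hα₁
    (fun k ↦ hcontr (t + k + 1) (by omega)) s
  calc TV (p (t + s)) (p t) ≤ TV (p (t + 1)) (p t) / (1 - α) := htail
    _ ≤ √(δ / 2) / (1 - α) := by
        gcongr
        exact hfirst.trans hpinsker
    _ = 1 / (1 - α) * √(δ / 2) := by ring

/-- Uniform tail bound.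
If `KL (p t) (p (t-1)) ≤ δ` and `TV (p (r+1)) (p r) ≤ α · TV (p r) (p (r-1))` for all
`r ≥ t`, then `sup_{s ≥ 1} TV (p (t+s)) (p t) ≤ (1/(1−α))·√(δ/2)`. -/
theorem uniform_tail_bound
    {ι : Type*} [Fintype ι] [Nonempty ι]
    (α δ : ℝ) (hα : α ∈ Set.Ico (0 : ℝ) 1) (hδ : 0 ≤ δ)
    (t : ℕ) (ht : 1 ≤ t)
    (p : ℕ → ι → ℝ) (hprob : ∀ u, IsProbDist (p u)) (hpos : ∀ u i, 0 < p u i)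
    (hKL : KL (p t) (p (t - 1)) ≤ δ)
    (hcontr : ∀ r ≥ t, TV (p (r + 1)) (p r) ≤ α * TV (p r) (p (r - 1))) :
    ∀ s ≥ 1, TV (p (t + s)) (p t) ≤ 1 / (1 - α) * Real.sqrt (δ / 2) :=
  uniform_tail_bound_general α δ hα t p hprob hpos hKL hcontr
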